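/- arXiv:1207.2408 — 4 statements merged into one kernel-verified Lean document; each statement's English description precedes it below -/
import Mathlib

section
/- Let N ≥ 2, let Ω be a convex bounded domain in ℝ^d whose boundary has Lebesgue measure zero, let μ be normalized Lebesgue measure on Ω, and let u_1,…,u_{N−1} : Ω → ℝ^d be bounded measurable vector fields. If ∫_Ω ∑_{ℓ=1}^{N−1} ⟨u_ℓ(x), x − S^ℓ x⟩ dμ(x) ≥ 0 for every μ-measure-preserving map S : Ω → Ω with S^N = identity μ-a.e., then there is a set Ω_0 of measure zero such that the (N−1)-tuple (u_1,…,u_{N−1}) is jointly N-monotone on Ω ∖ Ω_0. -/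
open MeasureTheory Finset
open scoped BigOperators RealInnerProductSpace

noncomputable section

/-- `ℝ^d` as a Euclidean space. -/
abbrev Ed (d : ℕ) := EuclideanSpace ℝ (Fin d)

/-- The cyclic permutation `σ(x₁,…,x_N) = (x₂,…,x_N,x₁)` acting on tuples. -/
def cyc {N : ℕ} {α : Type*} (x : Fin N → α) : Fin N → α := x ∘ finRotate N

/-- The `(N-1)`-tuple `(u 1, …, u (N-1))` is jointly `N`-monotone on `Ω`:
for every cycle `x 1, …, x (2N-1)` of points of `Ω` with `x (N+i) = x i` for
`1 ≤ i ≤ N-1`, one has `∑_{i=1}^{N} ∑_{ℓ=1}^{N-1} ⟨u ℓ (x i), x i - x (i+ℓ)⟩ ≥ 0`. -/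
def JointlyNMonotone (N : ℕ) {d : ℕ} (Ω : Set (Ed d)) (u : ℕ → Ed d → Ed d) : Prop :=
  ∀ x : ℕ → Ed d,
    (∀ i, 1 ≤ i → i ≤ 2 * N - 1 → x i ∈ Ω) →
    (∀ i, 1 ≤ i → i ≤ N - 1 → x (N + i) = x i) →
    0 ≤ ∑ i ∈ Icc 1 N, ∑ ℓ ∈ Icc 1 (N - 1), ⟪u ℓ (x i), x i - x (i + ℓ)⟫

/-- `H` is `N`-sub-antisymmetric on `Ω^N` : `∑_{i=0}^{N-1} H(σ^i x) ≤ 0` on `Ω^N`. -/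
def NSubAntisymmetric (N : ℕ) {d : ℕ} (Ω : Set (Ed d)) (H : (Fin N → Ed d) → ℝ) : Prop :=
  ∀ x : Fin N → Ed d, (∀ i, x i ∈ Ω) → ∑ i ∈ range N, H (cyc^[i] x) ≤ 0

/-- `H` is `N`-antisymmetric on `Ω^N` : `∑_{i=0}^{N-1} H(σ^i x) = 0` on `Ω^N`. -/
def NAntisymmetric (N : ℕ) {d : ℕ} (Ω : Set (Ed d)) (H : (Fin N → Ed d) → ℝ) : Prop :=
  ∀ x : Fin N → Ed d, (∀ i, x i ∈ Ω) → ∑ i ∈ range N, H (cyc^[i] x) = 0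

/-- `u` is `N`-cyclically monotone on `Ω`: for every cycle `x 1, …, x N, x (N+1) = x 1`
of points of `Ω`, `∑_{i=1}^{N} ⟨u (x i), x i - x (i+1)⟩ ≥ 0`. -/
def NCyclicallyMonotone (N : ℕ) {d : ℕ} (Ω : Set (Ed d)) (u : Ed d → Ed d) : Prop :=
  ∀ x : ℕ → Ed d,
    (∀ i, 1 ≤ i → i ≤ N → x i ∈ Ω) → x (N + 1) = x 1 →
    0 ≤ ∑ i ∈ Icc 1 N, ⟪u (x i), x i - x (i + 1)⟫

/-!
Test the hypothesis on the map that translates `N` small disjoint balls `B_j = B(c_j, ρ) ⊆ Ω`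
cyclically onto one another and fixes the rest of `Ω`: it preserves `μ`, has period `N`, and its
cost is `∑_j ∑_ℓ ⟪∫_{B_j} u_ℓ, c_j - c_{j+ℓ}⟫`. Dividing by the common volume of the balls and
letting `ρ → 0` with `c_j → z_j` turns the averages into the values `u_ℓ(z_j)` whenever every
`z_j` is a Lebesgue point of every `u_ℓ`, which yields the joint `N`-monotonicity inequality for
the cycle `z` outside the null set of non-Lebesgue points.
-/

open Metric Filter
open scoped Topology ENNReal
open Fin.NatCast

section BallRotation

variable {E : Type*} [NormedAddCommGroup E] {N : ℕ} [NeZero N]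

/-- When the balls `closedBall (c j) ρ` are disjoint, this translates each of them onto the next
one, cyclically, and fixes everything else: a measure-preserving map of period `N`. -/
def ballRotation (c : Fin N → E) (ρ : ℝ) (x : E) : E :=
  x + ∑ j, (closedBall (c j) ρ).indicator (fun _ => c (j + 1) - c j) x

variable {c : Fin N → E} {ρ : ℝ}

theorem ballRotation_of_forall_notMem {x : E} (hx : ∀ j, x ∉ closedBall (c j) ρ) :
    ballRotation c ρ x = x := by
  simp [ballRotation, Set.indicator_of_notMem (hx _)]

theorem ballRotation_iterate_of_forall_notMem {x : E} (hx : ∀ j, x ∉ closedBall (c j) ρ)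
    (n : ℕ) : (ballRotation c ρ)^[n] x = x :=
  Function.iterate_fixed (ballRotation_of_forall_notMem hx) n

theorem ballRotation_of_mem
    (hdisj : Pairwise fun i j => Disjoint (closedBall (c i) ρ) (closedBall (c j) ρ))
    {j : Fin N} {x : E} (hx : x ∈ closedBall (c j) ρ) :
    ballRotation c ρ x = x + (c (j + 1) - c j) := by
  rw [ballRotation, Finset.sum_eq_single j (fun i _ hij => Set.indicator_of_notMem
    (fun hi => (hdisj hij).le_bot ⟨hi, hx⟩) _) (by simp), Set.indicator_of_mem hx]

theorem add_mem_closedBall_succ_iff {j : Fin N} {x : E} :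
    x + (c (j + 1) - c j) ∈ closedBall (c (j + 1)) ρ ↔ x ∈ closedBall (c j) ρ := by
  simp only [mem_closedBall, dist_eq_norm]
  rw [show x + (c (j + 1) - c j) - c (j + 1) = x - c j by abel]

theorem ballRotation_iterate_of_mem
    (hdisj : Pairwise fun i j => Disjoint (closedBall (c i) ρ) (closedBall (c j) ρ))
    {j : Fin N} {x : E} (hx : x ∈ closedBall (c j) ρ) (n : ℕ) :
    (ballRotation c ρ)^[n] x = x + (c (j + n) - c j) := by
  induction n generalizing j x with
  | zero => simp
  | succ n ih =>
    rw [Function.iterate_succ_apply, ballRotation_of_mem hdisj hx,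
      ih (add_mem_closedBall_succ_iff.2 hx), Nat.cast_succ, add_comm (n : Fin N) 1,
      ← add_assoc]
    abel

theorem ballRotation_iterate_self
    (hdisj : Pairwise fun i j => Disjoint (closedBall (c i) ρ) (closedBall (c j) ρ)) (x : E) :
    (ballRotation c ρ)^[N] x = x := by
  by_cases hx : ∃ j, x ∈ closedBall (c j) ρ
  · obtain ⟨j, hj⟩ := hx
    simp [ballRotation_iterate_of_mem hdisj hj]
  · exact ballRotation_iterate_of_forall_notMem (not_exists.1 hx) N

theorem preimage_ballRotation_of_subset
    (hdisj : Pairwise fun i j => Disjoint (closedBall (c i) ρ) (closedBall (c j) ρ))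
    {Ω : Set E} (hsub : ∀ j, closedBall (c j) ρ ⊆ Ω) :
    ballRotation c ρ ⁻¹' Ω = Ω := by
  ext x
  by_cases hx : ∃ j, x ∈ closedBall (c j) ρ
  · obtain ⟨j, hj⟩ := hx
    simp only [Set.mem_preimage, hsub j hj, iff_true, ballRotation_of_mem hdisj hj]
    exact hsub _ (add_mem_closedBall_succ_iff.2 hj)
  · rw [Set.mem_preimage, ballRotation_of_forall_notMem (not_exists.1 hx)]

theorem preimage_ballRotation_inter_closedBall
    (hdisj : Pairwise fun i j => Disjoint (closedBall (c i) ρ) (closedBall (c j) ρ))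
    (A : Set E) (j : Fin N) :
    ballRotation c ρ ⁻¹' A ∩ closedBall (c j) ρ =
      (· + (c (j + 1) - c j)) ⁻¹' (A ∩ closedBall (c (j + 1)) ρ) := by
  ext x
  simp only [Set.mem_inter_iff, Set.mem_preimage, add_mem_closedBall_succ_iff]
  constructor
  · rintro ⟨hA, hx⟩
    exact ⟨ballRotation_of_mem hdisj hx ▸ hA, hx⟩
  · rintro ⟨hA, hx⟩
    exact ⟨(ballRotation_of_mem hdisj hx).symm ▸ hA, hx⟩

section Measure

variable [MeasurableSpace E] [BorelSpace E] [SecondCountableTopology E]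

theorem measurable_ballRotation : Measurable (ballRotation c ρ) :=
  measurable_id.add <| Finset.measurable_sum _ fun _ _ =>
    measurable_const.indicator measurableSet_closedBall

theorem measurePreserving_ballRotation (μ : Measure E) [μ.IsAddRightInvariant]
    (hdisj : Pairwise fun i j => Disjoint (closedBall (c i) ρ) (closedBall (c j) ρ)) :
    MeasurePreserving (ballRotation c ρ) μ μ := by
  refine ⟨measurable_ballRotation, Measure.ext fun A hA => ?_⟩
  set U := ⋃ j, closedBall (c j) ρ
  have hU : MeasurableSet U := .iUnion fun _ => measurableSet_closedBall
  have measure_inter_U : ∀ W, MeasurableSet W → μ (W ∩ U) = ∑ j, μ (W ∩ closedBall (c j) ρ) :=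
    fun W hW => by
      rw [Set.inter_iUnion, measure_iUnion (fun i j hij => (hdisj hij).mono
        Set.inter_subset_right Set.inter_subset_right)
        (fun _ => hW.inter measurableSet_closedBall), tsum_fintype]
  have hdiff : ballRotation c ρ ⁻¹' A \ U = A \ U := by
    ext x
    simp only [Set.mem_sdiff, U, Set.mem_iUnion, not_exists]
    constructor <;> rintro ⟨h, hx⟩ <;>
      simp_all [Set.mem_preimage, ballRotation_of_forall_notMem hx]
  have hA' := measurable_ballRotation (c := c) (ρ := ρ) hA
  rw [Measure.map_apply measurable_ballRotation hA, ← measure_inter_add_sdiff _ hU,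
    measure_inter_U _ hA', hdiff, ← measure_inter_add_sdiff A hU, measure_inter_U _ hA]
  congr 1
  simp_rw [preimage_ballRotation_inter_closedBall hdisj, measure_preimage_add_right]
  exact Fintype.sum_equiv (Equiv.addRight 1) _ _ fun _ => rfl

end Measure

section Integral

variable [InnerProductSpace ℝ E] [CompleteSpace E] [MeasurableSpace E] [BorelSpace E]

theorem setIntegral_cost_ballRotation (μ : Measure E) {Ω : Set E} {u : ℕ → E → E}
    (hdisj : Pairwise fun i j => Disjoint (closedBall (c i) ρ) (closedBall (c j) ρ))
    (hΩ : MeasurableSet Ω) (hsub : ∀ j, closedBall (c j) ρ ⊆ Ω)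
    (hu : ∀ ℓ ∈ Icc 1 (N - 1), IntegrableOn (u ℓ) Ω μ) :
    ∫ x in Ω, ∑ ℓ ∈ Icc 1 (N - 1), ⟪u ℓ x, x - (ballRotation c ρ)^[ℓ] x⟫ ∂μ =
      ∑ j, ∑ ℓ ∈ Icc 1 (N - 1), ⟪∫ x in closedBall (c j) ρ, u ℓ x ∂μ, c j - c (j + ℓ)⟫ := by
  have hu_ball : ∀ j, ∀ ℓ ∈ Icc 1 (N - 1), IntegrableOn (u ℓ) (closedBall (c j) ρ) μ :=
    fun j ℓ hℓ => (hu ℓ hℓ).mono_set (hsub j)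
  have hcost : ∀ j, Set.EqOn
      (fun x => ∑ ℓ ∈ Icc 1 (N - 1), ⟪u ℓ x, x - (ballRotation c ρ)^[ℓ] x⟫)
      (fun x => ∑ ℓ ∈ Icc 1 (N - 1), ⟪u ℓ x, c j - c (j + ℓ)⟫) (closedBall (c j) ρ) := by
    intro j x hx
    refine sum_congr rfl fun ℓ _ => ?_
    rw [ballRotation_iterate_of_mem hdisj hx]
    congr 1
    abel
  have hint : ∀ j, IntegrableOn
      (fun x => ∑ ℓ ∈ Icc 1 (N - 1), ⟪u ℓ x, c j - c (j + ℓ)⟫) (closedBall (c j) ρ) μ :=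
    fun j => integrable_finsetSum _ fun ℓ hℓ => (hu_ball j ℓ hℓ).inner_const _
  rw [setIntegral_eq_of_subset_of_forall_sdiff_eq_zero hΩ (Set.iUnion_subset hsub),
    integral_iUnion_fintype (fun _ => measurableSet_closedBall) hdisj
      fun j => (hint j).congr_fun (hcost j).symm measurableSet_closedBall]
  · refine sum_congr rfl fun j _ => ?_
    rw [setIntegral_congr_fun measurableSet_closedBall (hcost j),
      integral_finsetSum _ fun ℓ hℓ => (hu_ball j ℓ hℓ).inner_const _]
    refine sum_congr rfl fun ℓ hℓ => ?_
    simp_rw [real_inner_comm (c j - c (j + ℓ))]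
    exact integral_inner (hu_ball j ℓ hℓ) _
  · rintro x ⟨-, hx⟩
    simp only [Set.mem_iUnion, not_exists] at hx
    simp [ballRotation_iterate_of_forall_notMem hx]

end Integral

end BallRotation

section CyclicCost

variable {E : Type*} [NormedAddCommGroup E] [InnerProductSpace ℝ E] [MeasurableSpace E]
  {N : ℕ} {Ω : Set E} {u : ℕ → E → E}

def CyclicCostNonneg (N : ℕ) (ν : Measure E) (Ω : Set E) (u : ℕ → E → E) : Prop :=
  ∀ S : E → E, MeasurePreserving S ν ν → Set.MapsTo S Ω Ω → (∀ᵐ x ∂ν, S^[N] x = x) →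
    0 ≤ ∫ x, ∑ ℓ ∈ Icc 1 (N - 1), ⟪u ℓ x, x - S^[ℓ] x⟫ ∂ν

theorem CyclicCostNonneg.congr {ν : Measure E} {v : ℕ → E → E}
    (h : CyclicCostNonneg N ν Ω u) (huv : ∀ᵐ x ∂ν, ∀ ℓ, u ℓ x = v ℓ x) :
    CyclicCostNonneg N ν Ω v := by
  intro S hS hΩ hN
  refine (h S hS hΩ hN).trans_eq (integral_congr_ae ?_)
  filter_upwards [huv] with x hx
  simp only [hx]

variable [FiniteDimensional ℝ E] [BorelSpace E] {μ : Measure E} [μ.IsAddHaarMeasure]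

theorem sum_inner_setAverage_nonneg [NeZero N]
    (hS : CyclicCostNonneg N ((μ Ω)⁻¹ • μ.restrict Ω) Ω u) (hΩ : MeasurableSet Ω)
    (hΩ0 : μ Ω ≠ 0) (hΩtop : μ Ω ≠ ∞) (hu : ∀ ℓ ∈ Icc 1 (N - 1), IntegrableOn (u ℓ) Ω μ)
    {c : Fin N → E} {ρ : ℝ}
    (hdisj : Pairwise fun i j => Disjoint (closedBall (c i) ρ) (closedBall (c j) ρ))
    (hsub : ∀ j, closedBall (c j) ρ ⊆ Ω) :
    0 ≤ ∑ j, ∑ ℓ ∈ Icc 1 (N - 1), ⟪⨍ x in closedBall (c j) ρ, u ℓ x ∂μ, c j - c (j + ℓ)⟫ := by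
  have hpre := preimage_ballRotation_of_subset hdisj hsub
  have hpres : MeasurePreserving (ballRotation c ρ)
      ((μ Ω)⁻¹ • μ.restrict Ω) ((μ Ω)⁻¹ • μ.restrict Ω) := by
    have := (measurePreserving_ballRotation μ hdisj).restrict_preimage hΩ
    rw [hpre] at this
    exact this.smul_measure _
  have hmaps : Set.MapsTo (ballRotation c ρ) Ω Ω := fun x hx => by
    rwa [← hpre] at hx
  have hcost := hS _ hpres hmaps (ae_of_all _ (ballRotation_iterate_self hdisj))
  rw [integral_smul_measure, setIntegral_cost_ballRotation μ hdisj hΩ hsub hu] at hcost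
  have hpos : 0 < ((μ Ω)⁻¹).toReal :=
    ENNReal.toReal_pos (ENNReal.inv_ne_zero.2 hΩtop) (ENNReal.inv_ne_top.2 hΩ0)
  -- The balls have equal volume, so averaging only rescales the sum by a positive factor.
  simp_rw [setAverage_eq, Measure.addHaar_real_closedBall_center μ (c _), real_inner_smul_left,
    ← mul_sum]
  exact mul_nonneg (by positivity) (nonneg_of_mul_nonneg_right hcost hpos)

end CyclicCost

section ShrinkingBalls

variable {α : Type*} [PseudoMetricSpace α]

theorem eventually_closedBall_subset_of_isOpen {Ω : Set α} (hΩ : IsOpen Ω) {x : α} (hx : x ∈ Ω)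
    {K : ℝ} {w : ℝ → α} (hw : ∀ᶠ ρ in 𝓝[>] 0, x ∈ closedBall (w ρ) (K * ρ)) :
    ∀ᶠ ρ in 𝓝[>] 0, closedBall (w ρ) ρ ⊆ Ω := by
  have hsmall : Tendsto (fun ρ => closedBall x ((K + 1) * ρ)) (𝓝[>] 0) (𝓝 x).smallSets := by
    refine (tendsto_closedBall_smallSets x).comp (tendsto_nhdsWithin_of_tendsto_nhds ?_)
    simpa using (tendsto_id (x := 𝓝 (0 : ℝ))).const_mul (K + 1)
  filter_upwards [hw, hsmall.eventually (eventually_smallSets_subset.2 (hΩ.mem_nhds hx))]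
    with ρ hρ hsub
  refine (closedBall_subset_closedBall' ?_).trans hsub
  rw [mem_closedBall, dist_comm] at hρ
  linarith

end ShrinkingBalls

section LebesguePoint

variable {α F : Type*} [PseudoMetricSpace α] [MeasurableSpace α] [NormedAddCommGroup F]
  [NormedSpace ℝ F]

def IsLebesguePoint (μ : Measure α) (K : ℝ) (f : α → F) (x : α) : Prop :=
  ∀ w : ℝ → α, (∀ᶠ ρ in 𝓝[>] 0, x ∈ closedBall (w ρ) (K * ρ)) →
    Tendsto (fun ρ => ⨍ y in closedBall (w ρ) ρ, f y ∂μ) (𝓝[>] 0) (𝓝 (f x))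

theorem ae_isLebesguePoint [SecondCountableTopology α] [BorelSpace α] [CompleteSpace F]
    (μ : Measure α) [IsLocallyFiniteMeasure μ] [IsUnifLocDoublingMeasure μ] {f : α → F}
    (hf : LocallyIntegrable f μ) (K : ℝ) : ∀ᵐ x ∂μ, IsLebesguePoint μ K f x := by
  filter_upwards [IsUnifLocDoublingMeasure.ae_tendsto_average μ hf K] with x hx w hw
  exact hx w id tendsto_id hw

end LebesguePoint

section Perturbation

variable {E : Type*} [NormedAddCommGroup E] [NormedSpace ℝ E] {N : ℕ}

theorem eventually_pairwise_disjoint_closedBall (z : Fin N → E) {e : E} (he : ‖e‖ = 1) :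
    ∀ᶠ ρ in 𝓝[>] (0 : ℝ), Pairwise fun i j : Fin N =>
      Disjoint (closedBall (z i + (3 * ((i : ℕ) : ℝ) * ρ) • e) ρ)
        (closedBall (z j + (3 * ((j : ℕ) : ℝ) * ρ) • e) ρ) := by
  simp only [Pairwise, eventually_all]
  intro i j hij
  suffices ∀ᶠ ρ in 𝓝[>] (0 : ℝ),
      2 * ρ < dist (z i + (3 * ((i : ℕ) : ℝ) * ρ) • e) (z j + (3 * ((j : ℕ) : ℝ) * ρ) • e) from
    this.mono fun ρ hρ => closedBall_disjoint_closedBall (by linarith)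
  by_cases hz : z i = z j
  · have hgap : (1 : ℝ) ≤ |((i : ℕ) : ℝ) - (j : ℕ)| := by
      exact_mod_cast Int.one_le_abs (sub_ne_zero.2 (Int.natCast_inj.not.2 (Fin.val_ne_of_ne hij)))
    filter_upwards [self_mem_nhdsWithin] with ρ (hρ : 0 < ρ)
    rw [dist_eq_norm, hz, add_sub_add_left_eq_sub, ← sub_smul, norm_smul, he, mul_one,
      Real.norm_eq_abs, ← mul_sub_right_distrib, ← mul_sub, abs_mul, abs_mul,
      abs_of_pos (by positivity : (0 : ℝ) < 3), abs_of_pos hρ]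
    nlinarith
  · have hcont : Continuous fun ρ : ℝ =>
        dist (z i + (3 * ((i : ℕ) : ℝ) * ρ) • e) (z j + (3 * ((j : ℕ) : ℝ) * ρ) • e) - 2 * ρ := by
      fun_prop
    have h0 := hcont.tendsto 0
    simp only [mul_zero, zero_smul, add_zero, sub_zero] at h0
    filter_upwards [(h0.eventually (lt_mem_nhds (dist_pos.2 hz))).filter_mono
      nhdsWithin_le_nhds] with ρ hρ
    linarith

end Perturbation

section Limit

variable {E : Type*} [NormedAddCommGroup E] [InnerProductSpace ℝ E] [FiniteDimensional ℝ E]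
  [MeasurableSpace E] [BorelSpace E] {μ : Measure E} [μ.IsAddHaarMeasure]
  {N : ℕ} [NeZero N] {Ω : Set E} {u : ℕ → E → E}

theorem sum_inner_nonneg_of_isLebesguePoint
    (hS : CyclicCostNonneg N ((μ Ω)⁻¹ • μ.restrict Ω) Ω u) (hΩ : IsOpen Ω) (hΩtop : μ Ω ≠ ∞)
    (hu : ∀ ℓ ∈ Icc 1 (N - 1), IntegrableOn (u ℓ) Ω μ) {z : Fin N → E} (hz : ∀ j, z j ∈ Ω)
    (hleb : ∀ j, ∀ ℓ ∈ Icc 1 (N - 1), IsLebesguePoint μ (3 * N) (u ℓ) (z j)) :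
    0 ≤ ∑ j, ∑ ℓ ∈ Icc 1 (N - 1), ⟪u ℓ (z j), z j - z (j + ℓ)⟫ := by
  rcases subsingleton_or_nontrivial E with hE | hE
  · simp [Subsingleton.elim (z _) 0]
  obtain ⟨e, he⟩ := exists_norm_eq E zero_le_one
  -- Spreading the centres along `e` keeps the balls disjoint even where the `z j` coincide.
  set c : ℝ → Fin N → E := fun ρ j => z j + (3 * ((j : ℕ) : ℝ) * ρ) • e
  have hnear : ∀ j, ∀ᶠ ρ in 𝓝[>] 0, z j ∈ closedBall (c ρ j) (3 * N * ρ) := by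
    intro j
    filter_upwards [self_mem_nhdsWithin] with ρ (hρ : 0 < ρ)
    have hjN : ((j : ℕ) : ℝ) ≤ N := Nat.cast_le.2 j.is_lt.le
    rw [mem_closedBall, dist_comm, dist_eq_norm, add_sub_cancel_left, norm_smul, he, mul_one,
      Real.norm_eq_abs, abs_of_nonneg (by positivity)]
    gcongr
  have hc : ∀ j, Tendsto (fun ρ => c ρ j) (𝓝[>] 0) (𝓝 (z j)) := fun j =>
    ((Continuous.tendsto' (by fun_prop) 0 (z j) (by simp [c]))).mono_left nhdsWithin_le_nhds
  have hlim : Tendsto (fun ρ => ∑ j, ∑ ℓ ∈ Icc 1 (N - 1),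
      ⟪⨍ x in closedBall (c ρ j) ρ, u ℓ x ∂μ, c ρ j - c ρ (j + ℓ)⟫) (𝓝[>] 0)
      (𝓝 (∑ j, ∑ ℓ ∈ Icc 1 (N - 1), ⟪u ℓ (z j), z j - z (j + ℓ)⟫)) :=
    tendsto_finsetSum _ fun j _ => tendsto_finsetSum _ fun ℓ hℓ =>
      (hleb j ℓ hℓ _ (hnear j)).inner ((hc j).sub (hc _))
  refine ge_of_tendsto hlim ?_
  filter_upwards [eventually_pairwise_disjoint_closedBall z he,
    eventually_all.2 fun j => eventually_closedBall_subset_of_isOpen hΩ (hz j) (hnear j)]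
    with ρ hdisj hsub
  exact sum_inner_setAverage_nonneg hS hΩ.measurableSet (hΩ.measure_ne_zero μ ⟨z 0, hz 0⟩)
    hΩtop hu hdisj hsub

end Limit

theorem jointlyNMonotone_of_sum_fin_nonneg {d N : ℕ} [NeZero N] {Ω : Set (Ed d)}
    {u : ℕ → Ed d → Ed d}
    (h : ∀ z : Fin N → Ed d, (∀ j, z j ∈ Ω) →
      0 ≤ ∑ j, ∑ ℓ ∈ Icc 1 (N - 1), ⟪u ℓ (z j), z j - z (j + ℓ)⟫) :
    JointlyNMonotone N Ω u := by
  intro x hxΩ hper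
  have hidx : ∀ j : Fin N, ∀ ℓ ∈ Icc 1 (N - 1), x (j + 1 + ℓ) = x ((j + ℓ : Fin N) + 1) := by
    intro j ℓ hℓ
    have hj := j.is_lt
    rw [Finset.mem_Icc] at hℓ
    rw [Fin.val_add, Fin.val_natCast, Nat.mod_eq_of_lt (by omega : ℓ < N)]
    rcases lt_or_ge ((j : ℕ) + ℓ) N with hlt | hge
    · rw [Nat.mod_eq_of_lt hlt, add_right_comm]
    · rw [Nat.mod_eq_sub_mod hge, Nat.mod_eq_of_lt (by omega),
        ← hper (j + ℓ - N + 1) (by omega) (by omega)]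
      congr 1
      omega
  have hsum : ∀ F : ℕ → ℝ, ∑ i ∈ Icc 1 N, F i = ∑ j : Fin N, F (j + 1) := fun F => by
    rw [Fin.sum_univ_eq_sum_range (fun j => F (j + 1)), range_eq_Ico, sum_Ico_add' F 0 N 1]
    rfl
  rw [hsum]
  refine (h (fun j => x (j + 1)) fun j => hxΩ _ (by omega) (by have := j.is_lt; omega)).trans_eq
    (sum_congr rfl fun j _ => sum_congr rfl fun ℓ hℓ => ?_)
  rw [hidx j ℓ hℓ]

theorem statement12_general {d : ℕ} (N : ℕ) [NeZero N]
    (Ω : Set (Ed d)) (hΩopen : IsOpen Ω)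
    (hΩbdd : Bornology.IsBounded Ω)
    -- `μ` is normalized Lebesgue measure on `Ω`
    (μ : Measure (Ed d)) (hμ : μ = (volume Ω)⁻¹ • volume.restrict Ω)
    (u : ℕ → Ed d → Ed d)
    (humeas : ∀ ℓ ∈ Icc 1 (N - 1), Measurable (u ℓ))
    (hubdd : ∀ ℓ ∈ Icc 1 (N - 1), ∃ C : ℝ, ∀ x ∈ Ω, ‖u ℓ x‖ ≤ C)
    -- the cost is nonnegative for every measure-preserving `N`-involution of `Ω`
    (hS : ∀ S : Ed d → Ed d, MeasurePreserving S μ μ → Set.MapsTo S Ω Ω →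
      (∀ᵐ x ∂μ, S^[N] x = x) →
      0 ≤ ∫ x, ∑ ℓ ∈ Icc 1 (N - 1), ⟪u ℓ x, x - S^[ℓ] x⟫ ∂μ) :
    -- then `(u 1, …, u (N-1))` is jointly `N`-monotone off a set of measure zero
    ∃ Ω₀ : Set (Ed d), volume Ω₀ = 0 ∧ JointlyNMonotone N (Ω \ Ω₀) u := by
  subst hμ
  have hΩ := hΩopen.measurableSet
  have hΩtop : volume Ω ≠ ∞ := hΩbdd.measure_lt_top.ne
  -- Lebesgue points need a locally integrable function on the whole space.
  set v : ℕ → Ed d → Ed d := fun ℓ => Ω.indicator (u ℓ)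
  have hv : ∀ ℓ ∈ Icc 1 (N - 1), Integrable (v ℓ) := fun ℓ hℓ => by
    obtain ⟨C, hC⟩ := hubdd ℓ hℓ
    exact (integrable_indicator_iff hΩ).2 <| Measure.integrableOn_of_bounded hΩtop
      (humeas ℓ hℓ).aestronglyMeasurable (ae_restrict_of_forall_mem hΩ hC)
  have hSv : CyclicCostNonneg N ((volume Ω)⁻¹ • volume.restrict Ω) Ω v :=
    CyclicCostNonneg.congr hS <| Measure.ae_smul_measure (ae_restrict_of_forall_mem hΩ
      fun x hx ℓ => (Set.indicator_of_mem hx _).symm) _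
  have hleb : ∀ᵐ x, ∀ ℓ ∈ Icc 1 (N - 1), IsLebesguePoint volume (3 * N) (v ℓ) x :=
    (eventually_all_finset _).2 fun ℓ hℓ =>
      ae_isLebesguePoint volume (hv ℓ hℓ).locallyIntegrable _
  refine ⟨_, ae_iff.1 hleb, jointlyNMonotone_of_sum_fin_nonneg fun z hz => ?_⟩
  have hvz := sum_inner_nonneg_of_isLebesguePoint hSv hΩopen hΩtop
    (fun ℓ hℓ => (hv ℓ hℓ).integrableOn) (fun j => (hz j).1) fun j => not_not.1 (hz j).2
  simpa [v, Set.indicator_of_mem (hz _).1] using hvz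

theorem statement12 {d : ℕ} (N : ℕ) [NeZero N] (hN : 2 ≤ N)
    (Ω : Set (Ed d)) (hΩopen : IsOpen Ω) (hΩconv : Convex ℝ Ω)
    (hΩbdd : Bornology.IsBounded Ω) (hΩne : Ω.Nonempty)
    -- the boundary of `Ω` has Lebesgue measure zero
    (hΩfr : volume (frontier Ω) = 0)
    -- `μ` is normalized Lebesgue measure on `Ω`
    (μ : Measure (Ed d)) (hμ : μ = (volume Ω)⁻¹ • volume.restrict Ω)
    (u : ℕ → Ed d → Ed d)
    (humeas : ∀ ℓ ∈ Icc 1 (N - 1), Measurable (u ℓ))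
    (hubdd : ∀ ℓ ∈ Icc 1 (N - 1), ∃ C : ℝ, ∀ x ∈ Ω, ‖u ℓ x‖ ≤ C)
    -- the cost is nonnegative for every measure-preserving `N`-involution of `Ω`
    (hS : ∀ S : Ed d → Ed d, MeasurePreserving S μ μ → Set.MapsTo S Ω Ω →
      (∀ᵐ x ∂μ, S^[N] x = x) →
      0 ≤ ∫ x, ∑ ℓ ∈ Icc 1 (N - 1), ⟪u ℓ x, x - S^[ℓ] x⟫ ∂μ) :
    -- then `(u 1, …, u (N-1))` is jointly `N`-monotone off a set of measure zero
    ∃ Ω₀ : Set (Ed d), volume Ω₀ = 0 ∧ JointlyNMonotone N (Ω \ Ω₀) u :=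
  statement12_general N Ω hΩopen hΩbdd μ hμ u humeas hubdd hS
end
end

section
/- Let N ≥ 1, let Ω be a bounded domain in ℝ^d, let μ be a Borel probability measure on Ω, and let u : Ω → ℝ^d be a bounded measurable vector field that is (N+1)-cyclically monotone on Ω. Then for every μ-measure-preserving map S : Ω → Ω with S^N = identity μ-a.e., one has ∫_Ω ⟨u(x), x − Sx⟩ dμ(x) ≥ 0. In other words, every (N+1)-cyclically monotone vector field belongs to the polar set S_N(Ω,μ)^0, so S_{N+1}(Ω,μ)^0 ⊂ S_N(Ω,μ)^0 in the sense of this polarity. -/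
/-!
Let `g x = ⟪u x, x - S x⟫`. For a.e. `x` the orbit `x, S x, …, S^[N-1] x, S^[N] x = x` is a cycle
in `Ω` of length `N`, and an `(N+1)`-cyclically monotone field is also `N`-cyclically monotone
(repeat a point of the cycle), so `∑_{i<N} g (S^[i] x) ≥ 0`. Since `S` preserves `μ`, every term
of this sum has integral `∫ g`, hence `N • ∫ g ≥ 0`.
-/

open MeasureTheory Finset
open scoped BigOperators RealInnerProductSpace

noncomputable section

namespace MeasureTheory.MeasurePreserving

variable {α E : Type*} [MeasurableSpace α] [NormedAddCommGroup E] [NormedSpace ℝ E]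
  {μ : Measure α}

theorem integral_comp_of_integrable {β : Type*} [MeasurableSpace β] {ν : Measure β}
    {f : α → β} {g : β → E} (hf : MeasurePreserving f μ ν) (hg : Integrable g ν) :
    ∫ x, g (f x) ∂μ = ∫ y, g y ∂ν := by
  rw [← hf.map_eq] at hg ⊢
  exact (integral_map hf.aemeasurable hg.aestronglyMeasurable).symm

theorem integral_sum_iterate {S : α → α} {g : α → E} (hS : MeasurePreserving S μ μ)
    (hg : Integrable g μ) (N : ℕ) :
    ∫ x, ∑ i ∈ Finset.range N, g (S^[i] x) ∂μ = N • ∫ x, g x ∂μ := by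
  rw [integral_finsetSum (f := fun i x => g (S^[i] x)) _
    fun i _ => (hS.iterate i).integrable_comp_of_integrable hg]
  simp [(hS.iterate _).integral_comp_of_integrable hg]

end MeasureTheory.MeasurePreserving

namespace NCyclicallyMonotone

variable {d N : ℕ} {Ω : Set (Ed d)} {u : Ed d → Ed d}

theorem of_succ (h : NCyclicallyMonotone (N + 1) Ω u) : NCyclicallyMonotone N Ω u := by
  intro x hx hcyc
  rcases Nat.eq_zero_or_pos N with rfl | hN
  · simp
  -- append the point `x (N + 1) = x 1` once more: the extra step has zero displacement
  have hmem : ∀ i, 1 ≤ i → i ≤ N + 1 → x (min i (N + 1)) ∈ Ω := by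
    intro i hi1 hi2
    rcases Nat.lt_or_eq_of_le hi2 with _ | rfl
    · rw [min_eq_left hi2]; exact hx i hi1 (by omega)
    · rw [min_self, hcyc]; exact hx 1 le_rfl hN
  have h' := h _ hmem (by simp [hcyc])
  rw [sum_Icc_succ_top (by omega)] at h'
  rw [min_self, min_eq_right (by omega), sub_self, inner_zero_right, add_zero] at h'
  refine h'.trans_eq (sum_congr rfl fun i hi => ?_)
  rw [mem_Icc] at hi
  rw [min_eq_left (by omega), min_eq_left (by omega)]

theorem sum_orbit_nonneg (h : NCyclicallyMonotone N Ω u) {T : Ed d → Ed d}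
    (hT : Set.MapsTo T Ω Ω) {x : Ed d} (hx : x ∈ Ω) (hper : T^[N] x = x) :
    0 ≤ ∑ i ∈ range N, ⟪u (T^[i] x), T^[i] x - T (T^[i] x)⟫ := by
  have h' := h (fun i => T^[i - 1] x) (fun i _ _ => hT.iterate _ hx) (by simpa using hper)
  rw [← Ico_add_one_right_eq_Icc, sum_Ico_eq_sum_range] at h'
  simpa [add_comm 1, Function.iterate_succ_apply'] using h'

end NCyclicallyMonotone

theorem integrable_inner_sub_of_bounded {E : Type*} [NormedAddCommGroup E]
    [InnerProductSpace ℝ E] [MeasurableSpace E] [BorelSpace E] [SecondCountableTopology E]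
    {μ : Measure E} [IsFiniteMeasure μ] {s : Set E} (hs : Bornology.IsBounded s) (hμs : μ sᶜ = 0)
    {u S : E → E} (hu : Measurable u) {C : ℝ} (hC : ∀ x ∈ s, ‖u x‖ ≤ C) (hS : Measurable S)
    (hSs : Set.MapsTo S s s) :
    Integrable (fun x => ⟪u x, x - S x⟫) μ := by
  obtain ⟨R, hR⟩ := hs.subset_closedBall 0
  have hsub : ∀ x ∈ s, ‖x - S x‖ ≤ 2 * R := fun x hx => by
    have hx' := mem_closedBall_zero_iff.1 (hR hx)
    have hSx' := mem_closedBall_zero_iff.1 (hR (hSs hx))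
    linarith [norm_sub_le x (S x)]
  refine Integrable.of_bound (hu.inner (measurable_id.sub hS)).aestronglyMeasurable (C * (2 * R))
    ((measure_eq_zero_iff_ae_notMem.1 hμs).mono fun x hx => ?_)
  have hx : x ∈ s := not_not.1 hx
  calc ‖⟪u x, x - S x⟫‖ ≤ ‖u x‖ * ‖x - S x‖ := norm_inner_le_norm _ _
    _ ≤ C * (2 * R) :=
      mul_le_mul (hC x hx) (hsub x hx) (norm_nonneg _) ((norm_nonneg _).trans (hC x hx))

theorem statement16_general {d : ℕ} (N : ℕ) (hN : 1 ≤ N)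
    (Ω : Set (Ed d)) (hΩbdd : Bornology.IsBounded Ω)
    -- `μ` is a Borel probability measure on `Ω`
    (μ : Measure (Ed d)) [IsProbabilityMeasure μ] (hμΩ : μ Ωᶜ = 0)
    (u : Ed d → Ed d) (humeas : Measurable u)
    (hubdd : ∃ C : ℝ, ∀ x ∈ Ω, ‖u x‖ ≤ C)
    -- `u` is `(N+1)`-cyclically monotone on `Ω`
    (hmono : NCyclicallyMonotone (N + 1) Ω u)
    -- `S ∈ S_N(Ω,μ)`
    (S : Ed d → Ed d) (hSpres : MeasurePreserving S μ μ) (hSmaps : Set.MapsTo S Ω Ω)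
    (hSinv : ∀ᵐ x ∂μ, S^[N] x = x) :
    -- then `u` belongs to the polar set `S_N(Ω,μ)⁰`
    0 ≤ ∫ x, ⟪u x, x - S x⟫ ∂μ := by
  obtain ⟨C, hC⟩ := hubdd
  have hint := integrable_inner_sub_of_bounded hΩbdd hμΩ humeas hC hSpres.measurable hSmaps
  have horbit : ∀ᵐ x ∂μ, 0 ≤ ∑ i ∈ range N, ⟪u (S^[i] x), S^[i] x - S (S^[i] x)⟫ := by
    filter_upwards [measure_eq_zero_iff_ae_notMem.1 hμΩ, hSinv] with x hx hper
    exact hmono.of_succ.sum_orbit_nonneg hSmaps (not_not.1 hx) hper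
  have hsum : 0 ≤ N • ∫ x, ⟪u x, x - S x⟫ ∂μ := by
    rw [← hSpres.integral_sum_iterate hint]
    exact integral_nonneg_of_ae horbit
  exact (nsmul_nonneg_iff (by omega)).1 hsum

theorem statement16 {d : ℕ} (N : ℕ) (hN : 1 ≤ N)
    (Ω : Set (Ed d)) (hΩopen : IsOpen Ω) (hΩbdd : Bornology.IsBounded Ω)
    (hΩne : Ω.Nonempty)
    -- `μ` is a Borel probability measure on `Ω`
    (μ : Measure (Ed d)) [IsProbabilityMeasure μ] (hμΩ : μ Ωᶜ = 0)
    (u : Ed d → Ed d) (humeas : Measurable u)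
    (hubdd : ∃ C : ℝ, ∀ x ∈ Ω, ‖u x‖ ≤ C)
    -- `u` is `(N+1)`-cyclically monotone on `Ω`
    (hmono : NCyclicallyMonotone (N + 1) Ω u)
    -- `S ∈ S_N(Ω,μ)`
    (S : Ed d → Ed d) (hSpres : MeasurePreserving S μ μ) (hSmaps : Set.MapsTo S Ω Ω)
    (hSinv : ∀ᵐ x ∂μ, S^[N] x = x) :
    -- then `u` belongs to the polar set `S_N(Ω,μ)⁰`
    0 ≤ ∫ x, ⟪u x, x - S x⟫ ∂μ :=
  statement16_general N hN Ω hΩbdd μ hμΩ u humeas hubdd hmono S hSpres hSmaps hSinv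
end
end

section
/- Let N ≥ 2, let Ω ⊂ ℝ^d, and let u : Ω → ℝ^d. The (N−1)-tuple (u, u, …, u) consisting of N−1 copies of u is jointly N-monotone if and only if u is 2-cyclically monotone, i.e. ⟨u(x) − u(y), x − y⟩ ≥ 0 for all x, y ∈ Ω. -/
open MeasureTheory Finset
open scoped BigOperators RealInnerProductSpace

noncomputable section

/-!
Around the cycle, `i + ℓ` for `1 ≤ ℓ ≤ N - 1` runs exactly once through the indices `j ≠ i`, so the
joint-monotonicity sum is `∑_{i,j} ⟪u xᵢ, xᵢ - xⱼ⟫`, which symmetrizes to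
`½ ∑_{i,j} ⟪u xᵢ - u xⱼ, xᵢ - xⱼ⟫`. This is nonnegative when `u` is monotone; conversely, on the
cycle `(a, b, …, b)` it equals `(N - 1) ⟪u a - u b, a - b⟫`.
-/
section
variable {E : Type*} [NormedAddCommGroup E] [InnerProductSpace ℝ E]

theorem sum_sum_inner_sub_eq {ι : Type*} (s : Finset ι) (v w : ι → E) :
    ∑ i ∈ s, ∑ j ∈ s, ⟪v i, w i - w j⟫ =
      2⁻¹ * ∑ i ∈ s, ∑ j ∈ s, ⟪v i - v j, w i - w j⟫ := by
  have hswap : ∑ i ∈ s, ∑ j ∈ s, ⟪v j, w j - w i⟫ = ∑ i ∈ s, ∑ j ∈ s, ⟪v i, w i - w j⟫ :=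
    Finset.sum_comm
  have hsplit : ∀ i j, ⟪v i - v j, w i - w j⟫ = ⟪v i, w i - w j⟫ + ⟪v j, w j - w i⟫ := by
    intro i j
    rw [inner_sub_left, ← neg_sub (w i) (w j), inner_neg_right, sub_eq_add_neg]
  simp only [hsplit, Finset.sum_add_distrib, hswap]
  ring

theorem sum_Icc_add_eq_sum_erase {M : Type*} [AddCommMonoid M] {N i : ℕ} (g : ℕ → M)
    (hper : ∀ j, 1 ≤ j → j ≤ N - 1 → g (N + j) = g j) (hi : i ∈ Icc 1 N) :
    ∑ ℓ ∈ Icc 1 (N - 1), g (i + ℓ) = ∑ j ∈ (Icc 1 N).erase i, g j := by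
  rw [mem_Icc] at hi
  refine Finset.sum_nbij' (fun ℓ => if i + ℓ ≤ N then i + ℓ else i + ℓ - N)
    (fun j => if i < j then j - i else j + N - i) ?_ ?_ ?_ ?_ ?_
  all_goals simp only [mem_Icc, mem_erase]
  · intro ℓ hℓ; split_ifs <;> omega
  · intro j hj; split_ifs <;> omega
  · intro ℓ hℓ; split_ifs <;> omega
  · intro j hj; split_ifs <;> omega
  · intro ℓ hℓ
    split_ifs with h
    · rfl
    · rw [← hper (i + ℓ - N) (by omega) (by omega), Nat.add_sub_cancel' (by omega)]

theorem sum_cycle_inner_eq {N : ℕ} (u : E → E) (x : ℕ → E)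
    (hper : ∀ i, 1 ≤ i → i ≤ N - 1 → x (N + i) = x i) :
    ∑ i ∈ Icc 1 N, ∑ ℓ ∈ Icc 1 (N - 1), ⟪u (x i), x i - x (i + ℓ)⟫ =
      2⁻¹ * ∑ i ∈ Icc 1 N, ∑ j ∈ Icc 1 N, ⟪u (x i) - u (x j), x i - x j⟫ := by
  rw [← sum_sum_inner_sub_eq]
  refine Finset.sum_congr rfl fun i hi => ?_
  rw [sum_Icc_add_eq_sum_erase (fun j => ⟪u (x i), x i - x j⟫)
      (fun j h1 h2 => by rw [hper j h1 h2]) hi,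
    Finset.sum_erase _ (by rw [sub_self, inner_zero_right])]

end

theorem sum_sum_eq_card_sub_one_smul {ι α M : Type*} [AddCommMonoid M] (F : α → α → M)
    (hF : ∀ p, F p p = 0) {s : Finset ι} {i₀ : ι} (hi₀ : i₀ ∈ s) {x : ι → α} {a b : α}
    (hxa : x i₀ = a) (hxb : ∀ i ∈ s, i ≠ i₀ → x i = b) :
    ∑ i ∈ s, ∑ j ∈ s, F (x i) (x j) = (#s - 1) • (F a b + F b a) := by
  classical
  have hrow : ∀ G : α → M, ∑ j ∈ s, G (x j) = G a + (#s - 1) • G b := by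
    intro G
    rw [← add_sum_erase s _ hi₀, hxa, sum_congr rfl fun j hj =>
      congrArg G (hxb j (mem_of_mem_erase hj) (ne_of_mem_erase hj)), sum_const,
      card_erase_of_mem hi₀]
  refine (hrow fun p => ∑ j ∈ s, F p (x j)).trans ?_
  rw [hrow (F a), hrow (F b), hF, hF, smul_zero, add_zero, zero_add, smul_add]

theorem statement17 {d : ℕ} (N : ℕ) (hN : 2 ≤ N)
    (Ω : Set (Ed d)) (u : Ed d → Ed d) :
    JointlyNMonotone N Ω (fun _ => u) ↔
      (∀ x ∈ Ω, ∀ y ∈ Ω, 0 ≤ ⟪u x - u y, x - y⟫) := by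
  constructor
  · intro h a ha b hb
    let x : ℕ → Ed d := fun i => if i = 1 ∨ i = N + 1 then a else b
    have hper : ∀ i, 1 ≤ i → i ≤ N - 1 → x (N + i) = x i := fun i _ _ => by
      dsimp only [x]; grind
    have hcycle := h x (fun i _ _ => by dsimp only [x]; split_ifs <;> assumption) hper
    beta_reduce at hcycle
    rw [sum_cycle_inner_eq u x hper,
      sum_sum_eq_card_sub_one_smul (fun p q => ⟪u p - u q, p - q⟫) (fun p => by simp)
        (left_mem_Icc.2 (by omega : 1 ≤ N)) (a := a) (b := b) (by simp [x])
        (fun i hi hne => by simp only [x, mem_Icc] at hi ⊢; rw [if_neg (by omega)])] at hcycle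
    have hsymm : ⟪u b - u a, b - a⟫ = ⟪u a - u b, a - b⟫ := by
      rw [← neg_sub (u a), ← neg_sub a, inner_neg_neg]
    rw [hsymm, Nat.card_Icc, nsmul_eq_mul] at hcycle
    have hcard : (0 : ℝ) < (N + 1 - 1 - 1 : ℕ) := by
      exact_mod_cast (by omega : 0 < N + 1 - 1 - 1)
    have hdouble :=
      nonneg_of_mul_nonneg_right (nonneg_of_mul_nonneg_right hcycle (by norm_num)) hcard
    linarith
  · intro h x hΩ hper
    rw [sum_cycle_inner_eq u x hper]
    exact mul_nonneg (by norm_num) (sum_nonneg fun i hi => sum_nonneg fun j hj =>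
      h _ (hΩ i (mem_Icc.1 hi).1 (by grind)) _ (hΩ j (mem_Icc.1 hj).1 (by grind)))
end
end

section
/- Let N ≥ 2, let ℓ ≥ 1 divide N, and let Ω ⊂ ℝ^d. If u : Ω → ℝ^d is (N/ℓ)-cyclically monotone, then u is (N,ℓ)-monotone, i.e. for every cycle x_1,…,x_{N+ℓ} of points in Ω with x_{N+i}=x_i for 1 ≤ i ≤ ℓ, one has ∑_{i=1}^{N} ⟨u(x_i), x_i − x_{i+ℓ}⟩ ≥ 0. -/
open MeasureTheory Finset
open scoped BigOperators RealInnerProductSpace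

noncomputable section

/-- `u` is `(N,ℓ)`-monotone on `Ω`: for every cycle `x 1, …, x (N+ℓ)` of points of `Ω`
with `x (N+i) = x i` for `1 ≤ i ≤ ℓ`, one has `∑_{i=1}^{N} ⟨u (x i), x i - x (i+ℓ)⟩ ≥ 0`. -/
def NellMonotone (N ℓ : ℕ) {d : ℕ} (Ω : Set (Ed d)) (u : Ed d → Ed d) : Prop :=
  ∀ x : ℕ → Ed d,
    (∀ i, 1 ≤ i → i ≤ N + ℓ → x i ∈ Ω) →
    (∀ i, 1 ≤ i → i ≤ ℓ → x (N + i) = x i) →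
    0 ≤ ∑ i ∈ Icc 1 N, ⟪u (x i), x i - x (i + ℓ)⟫

/-! Splitting `{1, …, mℓ}` into the `ℓ` residue classes modulo `ℓ` splits the `(mℓ, ℓ)`-sum
into `ℓ` sums, one along each cycle `x (r), x (r + ℓ), …, x (r + (m-1)ℓ), x (r + mℓ) = x (r)`.
Each of these is an `m`-cycle of points of `Ω`, so its sum is nonnegative by `m`-cyclic
monotonicity. -/

theorem Finset.sum_Icc_one_eq_sum_range {M : Type*} [AddCommMonoid M] (f : ℕ → M) (n : ℕ) :
    ∑ i ∈ Icc 1 n, f i = ∑ i ∈ range n, f (i + 1) := by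
  induction n with
  | zero => simp
  | succ n ih => rw [sum_Icc_succ_top (by omega), ih, sum_range_succ]

theorem Finset.sum_range_mul_eq_sum_sum {M : Type*} [AddCommMonoid M] (f : ℕ → M) (m ℓ : ℕ) :
    ∑ i ∈ range (m * ℓ), f i = ∑ k ∈ range m, ∑ r ∈ range ℓ, f (k * ℓ + r) := by
  induction m with
  | zero => simp
  | succ m ih => rw [Nat.succ_mul, sum_range_add, ih, sum_range_succ]

namespace NCyclicallyMonotone

variable {m d : ℕ} {Ω : Set (Ed d)} {u : Ed d → Ed d}

theorem sum_range_nonneg (h : NCyclicallyMonotone m Ω u) (y : ℕ → Ed d)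
    (hy : ∀ k < m, y k ∈ Ω) (hcyc : y m = y 0) :
    0 ≤ ∑ k ∈ range m, ⟪u (y k), y k - y (k + 1)⟫ := by
  simpa [sum_Icc_one_eq_sum_range] using
    h (fun i => y (i - 1)) (fun i _ _ => hy _ (by omega)) (by simpa using hcyc)

theorem nellMonotone_mul (h : NCyclicallyMonotone m Ω u) (ℓ : ℕ) :
    NellMonotone (m * ℓ) ℓ Ω u := by
  intro x hx hcyc
  have residue_class : ∀ r ∈ range ℓ,
      0 ≤ ∑ k ∈ range m, ⟪u (x (k * ℓ + r + 1)), x (k * ℓ + r + 1) - x (k * ℓ + r + 1 + ℓ)⟫ := by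
    intro r hr
    rw [mem_range] at hr
    have hmem : ∀ k < m, x (k * ℓ + r + 1) ∈ Ω := fun k hk =>
      hx _ (by omega) (by nlinarith)
    have hshift : ∀ k, (k + 1) * ℓ + r + 1 = k * ℓ + r + 1 + ℓ := fun k => by ring
    have hclosed : x (m * ℓ + r + 1) = x (0 * ℓ + r + 1) := by
      simpa [add_assoc] using hcyc (r + 1) (by omega) (by omega)
    simpa only [hshift] using h.sum_range_nonneg (fun k => x (k * ℓ + r + 1)) hmem hclosed
  rw [sum_Icc_one_eq_sum_range, sum_range_mul_eq_sum_sum, sum_comm]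
  exact sum_nonneg residue_class

end NCyclicallyMonotone

theorem statement19_general {d : ℕ} (N ℓ : ℕ) (hdvd : ℓ ∣ N)
    (Ω : Set (Ed d)) (u : Ed d → Ed d)
    (h : NCyclicallyMonotone (N / ℓ) Ω u) :
    NellMonotone N ℓ Ω u :=
  Nat.div_mul_cancel hdvd ▸ h.nellMonotone_mul ℓ

theorem statement19 {d : ℕ} (N ℓ : ℕ) (hN : 2 ≤ N) (hℓ : 1 ≤ ℓ) (hdvd : ℓ ∣ N)
    (Ω : Set (Ed d)) (u : Ed d → Ed d)
    (h : NCyclicallyMonotone (N / ℓ) Ω u) :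
    NellMonotone N ℓ Ω u :=
  statement19_general N ℓ hdvd Ω u h
end
end
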